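/- Robustness: if two nonnegative utility functions u and ũ agree on which group is disadvantaged under the optimal unconstrained classifier (i.e., W_{ũ,c_unc*}(a) < W_{ũ,c_unc*}(1−a) and W_{u,c_unc*}(a) < W_{u,c_unc*}(1−a)), then the optimal ũ-WE classifier weakly increases the u-welfare of group a: W_{u,c_unc*}(a) ≤ W_{u,c_WE(ũ)*}(a). -/

import Mathlib

/-!
If the optimal `ũ`-WE threshold classifier `c` (threshold `λ`) rejected, with positive probability,
a point `x₀` of group `a` with `r(x₀, a) > 0`, then `r(x₀, a) ≤ λ ũ(x₀, a)` forces `λ > 0`, so `c`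
also rejects every point of group `a` with `r ≤ 0` and positive utility. Its `ũ`-welfare on `a` is
then strictly below that of `c_unc`, which is below the `ũ`-welfare of `c_unc` on `!a`. Using
`c_unc` on `a` and a convex combination of `c` and `c_unc` on `!a` gives a `ũ`-WE classifier with
strictly larger revenue, a contradiction. So `c ≥ c_unc` on group `a`, and `u`-welfare is
monotone in the classifier.
-/

/-- Probability of group {A = a}. -/
noncomputable def grpProb {X : Type*} [Fintype X] (P : X × Bool → ℝ) (a : Bool) : ℝ :=
  ∑ x : X, P (x, a)

/-- Group-a welfare of a classifier. -/
noncomputable def welfareG {X : Type*} [Fintype X]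
    (P : X × Bool → ℝ) (ubar : X × Bool → ℝ) (c : X × Bool → ℝ) (a : Bool) : ℝ :=
  (∑ x : X, P (x, a) * ubar (x, a) * c (x, a)) / grpProb P a

/-- Bank's revenue of a classifier. -/
noncomputable def revenue {X : Type*} [Fintype X]
    (P : X × Bool → ℝ) (r : X × Bool → ℝ) (c : X × Bool → ℝ) : ℝ :=
  ∑ z : X × Bool, P z * r z * c z

/-- Subgroup-optimal revenue R_a*(w). -/
noncomputable def RstarG {X : Type*} [Fintype X]
    (P : X × Bool → ℝ) (r ubar : X × Bool → ℝ) (a : Bool) (w : ℝ) : ℝ :=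
  sSup {v : ℝ | ∃ c : X → ℝ, (∀ x, c x ∈ Set.Icc (0:ℝ) 1) ∧
    (∑ x : X, (P (x, a) / grpProb P a) * ubar (x, a) * c x) = w ∧
    (∑ x : X, (P (x, a) / grpProb P a) * r (x, a) * c x) = v}

/-- Conditional expected utility E[u | A = a]. -/
noncomputable def condEu {X : Type*} [Fintype X]
    (P : X × Bool → ℝ) (ubar : X × Bool → ℝ) (a : Bool) : ℝ :=
  ∑ x : X, (P (x, a) / grpProb P a) * ubar (x, a)

/-- The optimal unconstrained (threshold) classifier: 1 iff r(x,a) > 0. -/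
noncomputable def cUnc {X : Type*} (r : X × Bool → ℝ) : X × Bool → ℝ :=
  fun z => if 0 < r z then 1 else 0

open Finset

lemma apply_eq_apply_not_iff {α : Type*} (f : Bool → α) (a : Bool) :
    f a = f !a ↔ f false = f true := by
  cases a <;> simp [eq_comm]

lemma cUnc_mem_Icc {X : Type*} (r : X × Bool → ℝ) (z : X × Bool) :
    cUnc r z ∈ Set.Icc (0 : ℝ) 1 := by
  unfold cUnc
  split_ifs <;> simp

lemma mul_le_mul_cUnc {X : Type*} (r : X × Bool → ℝ) (z : X × Bool) {t : ℝ}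
    (ht : t ∈ Set.Icc (0 : ℝ) 1) : r z * t ≤ r z * cUnc r z := by
  unfold cUnc
  split_ifs with hr
  · exact mul_le_mul_of_nonneg_left ht.2 hr.le
  · rw [mul_zero]
    exact mul_nonpos_of_nonpos_of_nonneg (not_lt.1 hr) ht.1

lemma mul_mul_le_mul_mul_of_pos_imp {p v c c' : ℝ} (hp : 0 ≤ p) (hv : 0 ≤ v)
    (h : 0 < p → 0 < v → c ≤ c') : p * v * c ≤ p * v * c' := by
  rcases hp.eq_or_lt with rfl | hp
  · simp
  rcases hv.eq_or_lt with rfl | hv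
  · simp
  exact mul_le_mul_of_nonneg_left (h hp hv) (mul_pos hp hv).le

def groupMix {X : Type*} (θ : Bool → ℝ) (c c' : X × Bool → ℝ) : X × Bool → ℝ :=
  fun z => c z + θ z.2 * (c' z - c z)

lemma groupMix_mem_Icc {X : Type*} {θ : Bool → ℝ} {c c' : X × Bool → ℝ}
    (hθ : ∀ b, θ b ∈ Set.Icc (0 : ℝ) 1) (hc : ∀ z, c z ∈ Set.Icc (0 : ℝ) 1)
    (hc' : ∀ z, c' z ∈ Set.Icc (0 : ℝ) 1) (z : X × Bool) :
    groupMix θ c c' z ∈ Set.Icc (0 : ℝ) 1 :=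
  (convex_Icc 0 1).add_smul_sub_mem (hc z) (hc' z) (hθ z.2)

section Welfare

variable {X : Type*} [Fintype X] {P : X × Bool → ℝ} {v : X × Bool → ℝ}

lemma welfareG_groupMix (θ : Bool → ℝ) (c c' : X × Bool → ℝ) (b : Bool) :
    welfareG P v (groupMix θ c c') b =
      welfareG P v c b + θ b * (welfareG P v c' b - welfareG P v c b) := by
  have hsum : ∑ x : X, P (x, b) * v (x, b) * groupMix θ c c' (x, b) =
      ∑ x : X, P (x, b) * v (x, b) * c (x, b) +
        θ b * (∑ x : X, P (x, b) * v (x, b) * c' (x, b) -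
          ∑ x : X, P (x, b) * v (x, b) * c (x, b)) := by
    rw [mul_sub, mul_sum, mul_sum, ← sum_sub_distrib, ← sum_add_distrib]
    exact sum_congr rfl fun x _ => by simp only [groupMix]; ring
  unfold welfareG
  rw [hsum]
  ring

lemma revenue_groupMix (r : X × Bool → ℝ) (θ : Bool → ℝ) (c c' : X × Bool → ℝ) :
    revenue P r (groupMix θ c c') =
      revenue P r c + ∑ z, θ z.2 * (P z * (r z * c' z - r z * c z)) := by
  unfold revenue
  rw [← sum_add_distrib]
  exact sum_congr rfl fun z _ => by simp only [groupMix]; ring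

variable (hP : ∀ z, 0 ≤ P z)
include hP

lemma exists_welfareG_eq_revenue_gt (r : X × Bool → ℝ) {c : X × Bool → ℝ}
    (hc : ∀ z, c z ∈ Set.Icc (0 : ℝ) 1) (hWE : welfareG P v c false = welfareG P v c true)
    {a : Bool} (hlt : welfareG P v c a < welfareG P v (cUnc r) a)
    (hdis : welfareG P v (cUnc r) a < welfareG P v (cUnc r) (!a))
    {x₀ : X} (hPx₀ : 0 < P (x₀, a)) (hrx₀ : 0 < r (x₀, a)) (hcx₀ : c (x₀, a) < 1) :
    ∃ c' : X × Bool → ℝ, (∀ z, c' z ∈ Set.Icc (0 : ℝ) 1) ∧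
      welfareG P v c' false = welfareG P v c' true ∧ revenue P r c < revenue P r c' := by
  have hW : welfareG P v c (!a) = welfareG P v c a :=
    ((apply_eq_apply_not_iff (welfareG P v c) a).2 hWE).symm
  -- `t` equalizes the welfare gains: `W(c_unc, a) - W(c, a) = t (W(c_unc, !a) - W(c, !a))`
  set t := (welfareG P v (cUnc r) a - welfareG P v c a) /
    (welfareG P v (cUnc r) (!a) - welfareG P v c a) with ht
  have hden : 0 < welfareG P v (cUnc r) (!a) - welfareG P v c a := by linarith
  have ht01 : t ∈ Set.Icc (0 : ℝ) 1 :=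
    ⟨div_nonneg (by linarith) hden.le, (div_le_one hden).2 (by linarith)⟩
  let θ : Bool → ℝ := fun b => if b = a then 1 else t
  have hθ : ∀ b, θ b ∈ Set.Icc (0 : ℝ) 1 := fun b => by
    by_cases hb : b = a <;> simp [θ, hb, ht01]
  refine ⟨groupMix θ c (cUnc r), groupMix_mem_Icc hθ hc (cUnc_mem_Icc r), ?_, ?_⟩
  · rw [← apply_eq_apply_not_iff (welfareG P v (groupMix θ c (cUnc r))) a,
      welfareG_groupMix, welfareG_groupMix, hW]
    simp only [θ, if_pos, Bool.not_ne_self, if_false, ht]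
    field_simp
  · rw [revenue_groupMix, lt_add_iff_pos_right]
    refine sum_pos' (fun z _ => mul_nonneg (hθ z.2).1 (mul_nonneg (hP z)
      (sub_nonneg.2 (mul_le_mul_cUnc r z (hc z))))) ⟨(x₀, a), mem_univ _, ?_⟩
    simpa [θ, cUnc, hrx₀, ← mul_one_sub] using mul_pos hPx₀ (mul_pos hrx₀ (sub_pos.2 hcx₀))

variable (hv : ∀ z, 0 ≤ v z)
include hv

lemma welfareG_le_welfareG {c c' : X × Bool → ℝ} {a : Bool}
    (h : ∀ x, 0 < P (x, a) → 0 < v (x, a) → c (x, a) ≤ c' (x, a)) :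
    welfareG P v c a ≤ welfareG P v c' a :=
  div_le_div_of_nonneg_right
    (sum_le_sum fun x _ => mul_mul_le_mul_mul_of_pos_imp (hP _) (hv _) (h x))
    (sum_nonneg fun x _ => hP (x, a))

lemma welfareG_lt_welfareG {c c' : X × Bool → ℝ} {a : Bool}
    (h : ∀ x, 0 < P (x, a) → 0 < v (x, a) → c (x, a) ≤ c' (x, a))
    {x₀ : X} (hPx₀ : 0 < P (x₀, a)) (hvx₀ : 0 < v (x₀, a)) (hlt : c (x₀, a) < c' (x₀, a)) :
    welfareG P v c a < welfareG P v c' a :=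
  div_lt_div_of_pos_right
    (sum_lt_sum (fun x _ => mul_mul_le_mul_mul_of_pos_imp (hP _) (hv _) (h x))
      ⟨x₀, mem_univ _, mul_lt_mul_of_pos_left hlt (mul_pos hPx₀ hvx₀)⟩)
    (hPx₀.trans_le (single_le_sum (fun x _ => hP (x, a)) (mem_univ x₀)))

lemma welfareG_lt_welfareG_cUnc_of_threshold (r : X × Bool → ℝ) {c : X × Bool → ℝ}
    {a : Bool} (hc : ∀ x, c (x, a) ≤ 1) {lam : ℝ}
    (hthr : ∀ x : X,
      (lam * v (x, a) < r (x, a) → c (x, a) = 1) ∧ (r (x, a) < lam * v (x, a) → c (x, a) = 0))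
    {x₀ : X} (hPx₀ : 0 < P (x₀, a)) (hrx₀ : 0 < r (x₀, a)) (hcx₀ : c (x₀, a) < 1) :
    welfareG P v c a < welfareG P v (cUnc r) a := by
  have hlv : 0 < lam * v (x₀, a) :=
    hrx₀.trans_le (not_lt.1 fun h => hcx₀.ne ((hthr x₀).1 h))
  have hlam : 0 < lam := pos_of_mul_pos_left hlv (hv _)
  have hvx₀ : 0 < v (x₀, a) := pos_of_mul_pos_right hlv hlam.le
  refine welfareG_lt_welfareG hP hv (fun x _ hvx => ?_) hPx₀ hvx₀ (by simpa [cUnc, hrx₀])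
  unfold cUnc
  split_ifs with hr
  · exact hc x
  · exact ((hthr x).2 ((not_lt.1 hr).trans_lt (mul_pos hlam hvx))).le

end Welfare

theorem stmt14_general {X : Type*} [Fintype X]
    (P : X × Bool → ℝ) (hP : ∀ z, 0 ≤ P z)
    (r ubar utbar : X × Bool → ℝ) (hu : ∀ z, 0 ≤ ubar z) (hut : ∀ z, 0 ≤ utbar z)
    (cWE : X × Bool → ℝ) (hcWE : ∀ z, cWE z ∈ Set.Icc (0:ℝ) 1)
    (hWE : welfareG P utbar cWE false = welfareG P utbar cWE true)
    (hopt : ∀ c : X × Bool → ℝ, (∀ z, c z ∈ Set.Icc (0:ℝ) 1) →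
      welfareG P utbar c false = welfareG P utbar c true →
      revenue P r c ≤ revenue P r cWE)
    (a : Bool)
    (lam : ℝ)
    (hthr : ∀ x : X,
      (lam * utbar (x, a) < r (x, a) → cWE (x, a) = 1) ∧
      (r (x, a) < lam * utbar (x, a) → cWE (x, a) = 0))
    (hdistilde : welfareG P utbar (cUnc r) a < welfareG P utbar (cUnc r) (!a)) :
    welfareG P ubar (cUnc r) a ≤ welfareG P ubar cWE a := by
  have accepts : ∀ x, 0 < P (x, a) → cUnc r (x, a) ≤ cWE (x, a) := by
    intro x hPx
    unfold cUnc
    split_ifs with hr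
    · by_contra! hlt
      have hW := welfareG_lt_welfareG_cUnc_of_threshold hP hut r (fun x => (hcWE (x, a)).2)
        hthr hPx hr hlt
      obtain ⟨c, hc, hWEc, hrev⟩ :=
        exists_welfareG_eq_revenue_gt hP r hcWE hWE hW hdistilde hPx hr hlt
      exact (hopt c hc hWEc).not_gt hrev
    · exact (hcWE _).1
  exact welfareG_le_welfareG hP hu fun x hPx _ => accepts x hPx

/-- robustness: if nonnegative utilities u and ũ agree on which group
is disadvantaged under the optimal unconstrained classifier, then the optimal ũ-WE
classifier (of threshold form) weakly increases the u-welfare of that group. -/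
theorem stmt14 {X : Type*} [Fintype X]
    (P : X × Bool → ℝ) (hP : ∀ z, 0 ≤ P z) (hPsum : ∑ z, P z = 1)
    (h0 : 0 < grpProb P false) (h1 : 0 < grpProb P true)
    (r ubar utbar : X × Bool → ℝ) (hu : ∀ z, 0 ≤ ubar z) (hut : ∀ z, 0 ≤ utbar z)
    (cWE : X × Bool → ℝ) (hcWE : ∀ z, cWE z ∈ Set.Icc (0:ℝ) 1)
    (hWE : welfareG P utbar cWE false = welfareG P utbar cWE true)
    (hopt : ∀ c : X × Bool → ℝ, (∀ z, c z ∈ Set.Icc (0:ℝ) 1) →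
      welfareG P utbar c false = welfareG P utbar c true →
      revenue P r c ≤ revenue P r cWE)
    (a : Bool)
    (lam : ℝ)
    (hsup : ∀ w' ∈ Set.Icc (0:ℝ) (condEu P utbar a),
      RstarG P r utbar a w' ≤
        RstarG P r utbar a (welfareG P utbar cWE a) +
          lam * (w' - welfareG P utbar cWE a))
    (hthr : ∀ x : X,
      (lam * utbar (x, a) < r (x, a) → cWE (x, a) = 1) ∧
      (r (x, a) < lam * utbar (x, a) → cWE (x, a) = 0))
    (hdistilde : welfareG P utbar (cUnc r) a < welfareG P utbar (cUnc r) (!a))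
    (hdis : welfareG P ubar (cUnc r) a < welfareG P ubar (cUnc r) (!a)) :
    welfareG P ubar (cUnc r) a ≤ welfareG P ubar cWE a :=
  stmt14_general P hP r ubar utbar hu hut cWE hcWE hWE hopt a lam hthr hdistilde
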